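/- Let f be twice continuously differentiable on an open set S ⊆ ℝ^N with set of local minima C*, and suppose γ < inf_{x ∈ C*} ‖∇²f(x)‖₂ < ∞. If the step size satisfies α ≥ 2/γ, then every local minimum x* of f is a Lyapunov unstable fixed point of the gradient descent map g(x) = x − α∇f(x). -/

import Mathlib

/-!
At a local minimum `x*` the gradient vanishes, so `x*` is fixed by `g`, and
`Dg(x*) = I - α H` with `H` the Hessian, which is symmetric. In an orthonormal eigenbasis of `H`
the linearization is diagonal with entries `1 - α μᵢ`; as `‖H‖ > γ`, some `|μᵢ| > γ`, and then
`|1 - α μᵢ| ≥ α |μᵢ| - 1 > 1`.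

Instability is a cone argument. Split the displacement `y = g^[k] x - x*` into its part along
the eigendirections expanded by a factor at least `ρ > 1` and the rest, which is not expanded.
Near `x*` the map `g` is its linearization up to an error `(ρ - 1)/4 · ‖y‖`, so the cone where the
expanded part dominates is invariant, and inside it the expanded part grows at least by the factor
`(ρ + 1)/2` per step. An orbit started on an expanded eigenvector therefore leaves every ball.
-/

def IsLyapunovStable {E : Type*} [NormedAddCommGroup E] (g : E → E) (p : E) : Prop :=
  ∀ ε > 0, ∃ δ > 0, ∀ x, ‖x - p‖ < δ → ∀ k : ℕ, ‖g^[k] x - p‖ < ε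

theorem pow_mul_le_of_cone {ρ : ℝ} (hρ : 1 < ρ) {a b e : ℕ → ℝ}
    (ha : ∀ k, ρ * a k - e k ≤ a (k + 1)) (hb : ∀ k, b (k + 1) ≤ b k + e k)
    (he : ∀ k, e k ≤ (ρ - 1) / 4 * (a k + b k)) (h₀ : b 0 ≤ a 0) (k : ℕ) :
    ((ρ + 1) / 2) ^ k * a 0 ≤ a k := by
  have cone : ∀ k, b k ≤ a k ∧ ((ρ + 1) / 2) ^ k * a 0 ≤ a k := by
    intro k
    induction k with
    | zero => simpa using h₀
    | succ k ih =>
      obtain ⟨hba, hgrow⟩ := ih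
      have he' : e k ≤ (ρ - 1) / 2 * a k := by
        nlinarith [he k, mul_nonneg (sub_nonneg.mpr hρ.le) (sub_nonneg.mpr hba)]
      have hstep : (ρ + 1) / 2 * a k ≤ a (k + 1) := by linarith [ha k]
      refine ⟨by linarith [hb k], ?_⟩
      calc ((ρ + 1) / 2) ^ (k + 1) * a 0 = (ρ + 1) / 2 * (((ρ + 1) / 2) ^ k * a 0) := by ring
        _ ≤ (ρ + 1) / 2 * a k := by gcongr
        _ ≤ a (k + 1) := hstep
  exact (cone k).2

theorem not_isLyapunovStable_of_split {E F : Type*} [NormedAddCommGroup E] [NormedSpace ℝ E]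
    [NormedAddCommGroup F] [NormedSpace ℝ F] {g : E → E} {p : E} {A : E →L[ℝ] E}
    (hg : HasFDerivAt g A p) (hp : g p = p) (P Q : E →ₗ[ℝ] F)
    (hPQ : ∀ y, ‖y‖ ≤ ‖P y‖ + ‖Q y‖) (hP : ∀ y, ‖P y‖ ≤ ‖y‖) (hQ : ∀ y, ‖Q y‖ ≤ ‖y‖)
    {ρ : ℝ} (hρ : 1 < ρ) (hPA : ∀ y, ρ * ‖P y‖ ≤ ‖P (A y)‖) (hQA : ∀ y, ‖Q (A y)‖ ≤ ‖Q y‖)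
    {u : E} (hPu : P u ≠ 0) (hQu : Q u = 0) : ¬ IsLyapunovStable g p := by
  intro hstab
  obtain ⟨ε, hε, hlin⟩ : ∃ ε > 0, ∀ x, ‖x - p‖ < ε →
      ‖g x - p - A (x - p)‖ ≤ (ρ - 1) / 4 * ‖x - p‖ := by
    obtain ⟨ε, hε, h⟩ := Metric.eventually_nhds_iff.mp
      (hg.isLittleO.def (by linarith : 0 < (ρ - 1) / 4))
    exact ⟨ε, hε, fun x hx => by simpa [hp] using h (by rwa [dist_eq_norm])⟩
  obtain ⟨δ, hδ, hstay⟩ := hstab ε hε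
  have hu : 0 < ‖u‖ := norm_pos_iff.mpr fun hu => hPu (by rw [hu, map_zero])
  set t := δ / (2 * ‖u‖)
  have ht : 0 < t := by positivity
  set y : ℕ → E := fun k => g^[k] (p + t • u) - p
  have hy : ∀ k, ‖y k‖ < ε := hstay _ <| by
    have htu : t * ‖u‖ = δ / 2 := by simp only [t]; field_simp
    rw [add_sub_cancel_left, norm_smul, Real.norm_of_nonneg ht.le, htu]
    linarith
  set r : ℕ → E := fun k => y (k + 1) - A (y k)
  have hr : ∀ k, ‖r k‖ ≤ (ρ - 1) / 4 * ‖y k‖ := fun k => by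
    simpa [r, y, Function.iterate_succ_apply'] using hlin _ (hy k)
  have hysucc : ∀ k, y (k + 1) = A (y k) + r k := fun k => (add_sub_cancel _ _).symm
  have hgrowth := pow_mul_le_of_cone hρ (a := fun k => ‖P (y k)‖) (b := fun k => ‖Q (y k)‖)
    (e := fun k => ‖r k‖)
    (fun k => by
      rw [hysucc, map_add]
      linarith [norm_le_add_norm_add (P (A (y k))) (P (r k)), hPA (y k), hP (r k)])
    (fun k => by
      rw [hysucc, map_add]
      linarith [norm_add_le (Q (A (y k))) (Q (r k)), hQA (y k), hQ (r k)])
    (fun k => (hr k).trans (mul_le_mul_of_nonneg_left (hPQ _) (by linarith)))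
    (by simp [y, map_smul, hQu])
  have ha₀ : 0 < ‖P (y 0)‖ := by
    simp only [y, Function.iterate_zero_apply, add_sub_cancel_left, map_smul, norm_smul,
      Real.norm_of_nonneg ht.le]
    exact mul_pos ht (norm_pos_iff.mpr hPu)
  obtain ⟨k, hk⟩ := pow_unbounded_of_one_lt (ε / ‖P (y 0)‖) (by linarith : 1 < (ρ + 1) / 2)
  rw [div_lt_iff₀ ha₀] at hk
  linarith [hgrowth k, hP (y k), hy k]

namespace EuclideanSpace

variable {ι : Type*}

theorem norm_le_norm_of_forall_abs_le [Fintype ι] {y z : EuclideanSpace ℝ ι}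
    (h : ∀ i, |y i| ≤ |z i|) : ‖y‖ ≤ ‖z‖ := by
  rw [EuclideanSpace.norm_eq, EuclideanSpace.norm_eq]
  gcongr with i
  exact h i

variable [DecidableEq ι]

def restrictCoords (s : Finset ι) : EuclideanSpace ℝ ι →ₗ[ℝ] EuclideanSpace ℝ ι where
  toFun y := WithLp.toLp 2 fun i => if i ∈ s then y i else 0
  map_add' y z := by ext i; by_cases hi : i ∈ s <;> simp [hi]
  map_smul' c y := by ext i; by_cases hi : i ∈ s <;> simp [hi]

@[simp]
theorem restrictCoords_apply (s : Finset ι) (y : EuclideanSpace ℝ ι) (i : ι) :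
    restrictCoords s y i = if i ∈ s then y i else 0 := rfl

theorem restrictCoords_add_restrictCoords_compl [Fintype ι] (s : Finset ι)
    (y : EuclideanSpace ℝ ι) :
    restrictCoords s y + restrictCoords sᶜ y = y := by
  ext i
  by_cases hi : i ∈ s <;> simp [hi]

theorem norm_restrictCoords_le [Fintype ι] (s : Finset ι) (y : EuclideanSpace ℝ ι) :
    ‖restrictCoords s y‖ ≤ ‖y‖ := by
  refine norm_le_norm_of_forall_abs_le fun i => ?_
  rw [restrictCoords_apply]
  split_ifs <;> simp

end EuclideanSpace

open EuclideanSpace in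
theorem not_isLyapunovStable_of_diagonal {E ι : Type*} [NormedAddCommGroup E]
    [InnerProductSpace ℝ E] [Fintype ι] (b : OrthonormalBasis ι ℝ E) (d : ι → ℝ)
    {A : E →L[ℝ] E} (hA : ∀ v i, b.repr (A v) i = d i * b.repr v i) {g : E → E} {p : E}
    (hg : HasFDerivAt g A p) (hp : g p = p) {i₀ : ι} (hi₀ : 1 < |d i₀|) :
    ¬ IsLyapunovStable g p := by
  classical
  set U : Finset ι := {i | 1 < |d i|}
  have hi₀U : i₀ ∈ U := by simpa [U] using hi₀
  set ρ := U.inf' ⟨i₀, hi₀U⟩ fun i => |d i|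
  have hρ : 1 < ρ := (Finset.lt_inf'_iff _).mpr fun i hi => by simpa [U] using hi
  have hcoord : ∀ y, ‖y‖ = ‖b.repr y‖ := fun y => (b.repr.norm_map y).symm
  let P := restrictCoords U ∘ₗ b.repr.toLinearMap
  let Q := restrictCoords Uᶜ ∘ₗ b.repr.toLinearMap
  refine not_isLyapunovStable_of_split hg hp P Q (fun y => ?_) (fun y => ?_) (fun y => ?_) hρ
    (fun y => ?_) (fun y => ?_) (u := b i₀) ?_ ?_
  · rw [hcoord y]
    conv_lhs => rw [← restrictCoords_add_restrictCoords_compl U (b.repr y)]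
    exact norm_add_le _ _
  · rw [hcoord y]
    exact norm_restrictCoords_le _ _
  · rw [hcoord y]
    exact norm_restrictCoords_le _ _
  · rw [← Real.norm_of_nonneg (by linarith : 0 ≤ ρ), ← norm_smul]
    refine norm_le_norm_of_forall_abs_le fun i => ?_
    simp only [P, PiLp.smul_apply, smul_eq_mul, LinearMap.comp_apply,
      LinearIsometryEquiv.coe_toLinearEquiv, LinearEquiv.coe_coe, restrictCoords_apply, hA]
    split_ifs with hi
    · rw [abs_mul, abs_mul, abs_of_pos (by linarith : 0 < ρ)]
      gcongr
      exact Finset.inf'_le _ hi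
    · simp
  · refine norm_le_norm_of_forall_abs_le fun i => ?_
    simp only [Q, LinearMap.comp_apply, LinearIsometryEquiv.coe_toLinearEquiv,
      LinearEquiv.coe_coe, restrictCoords_apply, hA]
    split_ifs with hi
    · rw [abs_mul]
      refine mul_le_of_le_one_left (abs_nonneg _) ?_
      simpa [U] using hi
    · simp
  · intro h
    simpa [P, hi₀U] using congrArg (· i₀) h
  · ext i
    by_cases hi : i = i₀ <;> simp [Q, hi, hi₀U]

theorem LinearMap.IsSymmetric.exists_lt_abs_eigenvalues {E : Type*} [NormedAddCommGroup E]
    [InnerProductSpace ℝ E] [FiniteDimensional ℝ E] {T : E →L[ℝ] E}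
    (hT : (T : E →ₗ[ℝ] E).IsSymmetric) {n : ℕ} (hn : Module.finrank ℝ E = n) {γ : ℝ}
    (hγ : 0 ≤ γ) (h : γ < ‖T‖) : ∃ i, γ < |hT.eigenvalues hn i| := by
  by_contra! hle
  refine h.not_ge (T.opNorm_le_bound hγ fun v => ?_)
  set b := hT.eigenvectorBasis hn
  rw [← Real.norm_of_nonneg hγ, ← norm_smul, ← b.repr.norm_map, ← b.repr.norm_map]
  refine EuclideanSpace.norm_le_norm_of_forall_abs_le fun i => ?_
  have hdiag : b.repr (T v) i = hT.eigenvalues hn i * b.repr v i :=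
    hT.eigenvectorBasis_apply_self_apply hn v i
  simp only [hdiag, map_smul, PiLp.smul_apply, smul_eq_mul, abs_mul, abs_of_nonneg hγ]
  exact mul_le_mul_of_nonneg_right (hle i) (abs_nonneg _)

section Hessian

open scoped InnerProductSpace

variable {E : Type*} [NormedAddCommGroup E] [InnerProductSpace ℝ E] [CompleteSpace E]

theorem inner_fderiv_gradient_apply {f : E → ℝ} {x : E}
    (hgrad : DifferentiableAt ℝ (gradient f) x) (hdf : DifferentiableAt ℝ (fderiv ℝ f) x)
    (u v : E) : ⟪fderiv ℝ (gradient f) x u, v⟫_ℝ = fderiv ℝ (fderiv ℝ f) x u v := by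
  have hfun : (innerSL ℝ v) ∘ gradient f = fun y => fderiv ℝ f y v :=
    funext fun y => by simp [inner_gradient_right]
  have h₁ := (innerSL ℝ v).hasFDerivAt.comp x hgrad.hasFDerivAt
  rw [hfun] at h₁
  simpa [real_inner_comm] using
    congrArg (· u) (h₁.unique (hdf.hasFDerivAt.clm_apply (hasFDerivAt_const v x)))

theorem isSymmetric_fderiv_gradient {f : E → ℝ} {x : E} (hf : ContDiffAt ℝ 2 f x)
    (hgrad : DifferentiableAt ℝ (gradient f) x) :
    (fderiv ℝ (gradient f) x : E →ₗ[ℝ] E).IsSymmetric := by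
  have hdf : DifferentiableAt ℝ (fderiv ℝ f) x :=
    (hf.fderiv_right (m := 1) (by norm_num)).differentiableAt one_ne_zero
  intro u v
  simp only [ContinuousLinearMap.coe_coe]
  rw [inner_fderiv_gradient_apply hgrad hdf, real_inner_comm,
    inner_fderiv_gradient_apply hgrad hdf]
  exact hf.isSymmSndFDerivAt (by simp) u v

end Hessian

theorem differentiableAt_gradient {ι : Type*} [Fintype ι] {f : EuclideanSpace ℝ ι → ℝ}
    {x : EuclideanSpace ℝ ι} (h : DifferentiableAt ℝ (fderiv ℝ f) x) :
    DifferentiableAt ℝ (gradient f) x := by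
  classical
  refine differentiableAt_euclidean.mpr fun i => ?_
  have hcoord : (fun y => gradient f y i) = fun y => fderiv ℝ f y (EuclideanSpace.single i 1) :=
    funext fun y => by simp [← inner_gradient_left, EuclideanSpace.inner_single_right]
  rw [hcoord]
  exact h.clm_apply (differentiableAt_const _)

theorem one_lt_abs_one_sub_mul {α γ μ : ℝ} (hα : 0 < α) (hαγ : 2 ≤ α * γ) (hμ : γ < |μ|) :
    1 < |1 - α * μ| :=
  calc 1 < α * |μ| - 1 := by nlinarith
    _ = |α * μ| - |1| := by rw [abs_mul, abs_of_pos hα, abs_one]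
    _ ≤ |1 - α * μ| := by rw [abs_sub_comm]; exact abs_sub_abs_le_abs_sub _ _

/-- Upper bound on step size: `f` twice continuously
differentiable on an open `S ⊆ ℝ^N`; if `γ` is a strict lower bound on the
spectral norm of the Hessian over the set of local minima, and `α ≥ 2/γ`, then
every local minimum `x* ∈ S` of `f` is a Lyapunov unstable fixed point of the
gradient descent map `g x = x - α • ∇f x` (i.e. it is not Lyapunov stable). -/
theorem large_step_size_makes_minima_unstable
    {N : ℕ} (S : Set (EuclideanSpace ℝ (Fin N))) (hS : IsOpen S)
    (f : EuclideanSpace ℝ (Fin N) → ℝ) (hf : ContDiffOn ℝ 2 f S)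
    (γ : ℝ) (hγ : 0 < γ)
    (hlow : ∀ x ∈ S, IsLocalMin f x → γ < ‖fderiv ℝ (gradient f) x‖)
    (α : ℝ) (hα : 2 / γ ≤ α)
    (g : EuclideanSpace ℝ (Fin N) → EuclideanSpace ℝ (Fin N))
    (hg : ∀ x, g x = x - α • gradient f x) :
    ∀ xstar ∈ S, IsLocalMin f xstar →
      (g xstar = xstar ∧
       ¬ (∀ ε > 0, ∃ δ > 0, ∀ x, ‖x - xstar‖ < δ → ∀ k : ℕ, ‖g^[k] x - xstar‖ < ε)) := by
  intro xstar hxS hmin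
  have hα₀ : 0 < α := (div_pos two_pos hγ).trans_le hα
  have hαγ : 2 ≤ α * γ := (div_le_iff₀ hγ).mp hα
  have hf₂ : ContDiffAt ℝ 2 f xstar := hf.contDiffAt (hS.mem_nhds hxS)
  have hgrad : DifferentiableAt ℝ (gradient f) xstar := differentiableAt_gradient
    ((hf₂.fderiv_right (m := 1) (by norm_num)).differentiableAt one_ne_zero)
  set H := fderiv ℝ (gradient f) xstar
  have hH : (H : EuclideanSpace ℝ (Fin N) →ₗ[ℝ] _).IsSymmetric :=
    isSymmetric_fderiv_gradient hf₂ hgrad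
  have hN : Module.finrank ℝ (EuclideanSpace ℝ (Fin N)) = N := finrank_euclideanSpace_fin
  obtain ⟨i, hi⟩ := hH.exists_lt_abs_eigenvalues hN hγ.le (hlow xstar hxS hmin)
  set μ := hH.eigenvalues hN
  set b := hH.eigenvectorBasis hN
  have hfix : g xstar = xstar := by simp [hg, gradient, hmin.fderiv_eq_zero]
  have hDg : HasFDerivAt g (ContinuousLinearMap.id ℝ _ - α • H) xstar := by
    rw [show g = fun x => x - α • gradient f x from funext hg]
    exact (hasFDerivAt_id xstar).sub (hgrad.hasFDerivAt.const_smul α)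
  refine ⟨hfix, not_isLyapunovStable_of_diagonal b (fun j => 1 - α * μ j)
    (fun v j => ?_) hDg hfix (one_lt_abs_one_sub_mul hα₀ hαγ hi)⟩
  have hdiag : b.repr (H v) j = μ j * b.repr v j := hH.eigenvectorBasis_apply_self_apply hN v j
  simp only [sub_apply, ContinuousLinearMap.id_apply, smul_apply, map_sub, map_smul,
    PiLp.sub_apply, PiLp.smul_apply, hdiag, smul_eq_mul]
  ring
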